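/- arXiv:2112.14047 — 2 statements merged into one kernel-verified Lean document; each statement's English description precedes it below -/
import Mathlib

section
/- For a positive integer r, as x → ∞, sum_{k ≤ x} h_k^{(r)} = x^r log x / r! - ψ(r+1) x^r / r! + O(x^{r-1} log x). -/
open Filter Finset Asymptotics

/-- Hyperharmonic numbers: `hh 0 n = 1/n`, `hh (r+1) n = ∑_{k=1}^n hh r k`. -/
noncomputable def hh : ℕ → ℕ → ℝ
  | 0, n => 1 / n
  | r + 1, n => ∑ k ∈ Finset.Icc 1 n, hh r k

/-- Digamma function `ψ = Γ'/Γ` on the reals. -/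
noncomputable def digamma (x : ℝ) : ℝ := deriv Real.Gamma x / Real.Gamma x

/-!
Summing `hh r` up to `⌊x⌋ = n` gives `hh (r + 1) n`, and the recurrence
`hh (r + 1) (n + 1) = hh (r + 1) n + hh r (n + 1)` yields the closed form
`r! · hh (r + 1) n = B · (H_{n+r} - H_r)` with `B = (n + 1)(n + 2)⋯(n + r)`. Since
`ψ(r + 1) = H_r - γ`, the error term is `1 / r!` times
`B · (H_{n+r} - γ - log x) + (B - x^r) · (log x + γ - H_r)`.
By the two monotone Euler–Mascheroni sequences, `0 ≤ H_{n+r} - γ - log x = O(1/x)`, and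
`x^r ≤ B ≤ (x + r)^r` gives `B = O(x^r)` and `B - x^r = O(x^{r-1})`.
-/

open Real
open scoped Nat

local notation "γ" => eulerMascheroniConstant

lemma hh_one (n : ℕ) : hh 1 n = harmonic n := by
  simp [hh, harmonic_eq_sum_Icc]

lemma hh_succ_succ (r n : ℕ) : hh (r + 1) (n + 1) = hh (r + 1) n + hh r (n + 1) :=
  Finset.sum_Icc_succ_top (by omega) _

lemma choose_mul_harmonic_sub_succ (m r : ℕ) :
    ((m + 2).choose (r + 1) : ℝ) * (harmonic (m + 2) - harmonic (r + 1)) =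
      (m + 1).choose (r + 1) * (harmonic (m + 1) - harmonic (r + 1)) +
        (m + 1).choose r * (harmonic (m + 1) - harmonic r) := by
  have hpascal : ((m + 2).choose (r + 1) : ℝ) = (m + 1).choose r + (m + 1).choose (r + 1) := by
    exact_mod_cast Nat.choose_succ_succ' (m + 1) r
  have habsorb : ((m + 2).choose (r + 1) : ℝ) / (m + 2) = (m + 1).choose r / (r + 1) := by
    rw [div_eq_div_iff (by positivity) (by positivity)]
    have h := congrArg (Nat.cast : ℕ → ℝ) (Nat.add_one_mul_choose_eq (m + 1) r)
    push_cast at h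
    linarith
  rw [harmonic_succ (m + 1), harmonic_succ r]
  push_cast
  linear_combination habsorb + (harmonic (m + 1) - harmonic r - ((r : ℝ) + 1)⁻¹) * hpascal

theorem hh_succ_eq_choose_mul (r n : ℕ) :
    hh (r + 1) n = (n + r).choose r * (harmonic (n + r) - harmonic r : ℝ) := by
  induction r generalizing n with
  | zero => simp [hh_one]
  | succ r ihr =>
    induction n with
    | zero => simp [hh]
    | succ n ihn =>
      rw [hh_succ_succ, ihn, ihr, show n + 1 + (r + 1) = n + r + 2 by omega,
        show n + (r + 1) = n + r + 1 by omega, show n + 1 + r = n + r + 1 by omega]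
      exact (choose_mul_harmonic_sub_succ (n + r) r).symm

theorem factorial_mul_hh_succ (r n : ℕ) :
    r ! * hh (r + 1) n = (n + 1).ascFactorial r * (harmonic (n + r) - harmonic r : ℝ) := by
  rw [hh_succ_eq_choose_mul, Nat.ascFactorial_eq_factorial_mul_choose]
  push_cast
  ring

lemma digamma_nat_add_one (r : ℕ) : digamma (r + 1) = harmonic r - γ := by
  rw [digamma, deriv_Gamma_nat, Gamma_nat_eq_factorial]
  field_simp
  ring

lemma add_pow_sub_pow_le {a c : ℝ} (ha : 0 ≤ a) (hc : 0 ≤ c) (n : ℕ) :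
    (a + c) ^ (n + 1) - a ^ (n + 1) ≤ c * (n + 1) * (a + c) ^ n := by
  have h := abs_pow_sub_pow_le (a + c) a (n + 1)
  rwa [add_sub_cancel_left, Nat.add_sub_cancel,
    abs_of_nonneg (sub_nonneg.2 (by gcongr; linarith)), abs_of_nonneg hc,
    abs_of_nonneg ha, abs_of_nonneg (add_nonneg ha hc),
    max_eq_left (by linarith), Nat.cast_succ] at h

lemma pow_le_ascFactorial_floor (r : ℕ) {x : ℝ} (hx : 0 ≤ x) :
    x ^ r ≤ (⌊x⌋₊ + 1).ascFactorial r ∧ ((⌊x⌋₊ + 1).ascFactorial r : ℝ) ≤ (x + r) ^ r := by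
  constructor
  · calc x ^ r ≤ ((⌊x⌋₊ + 1 : ℕ) : ℝ) ^ r := by
          gcongr; push_cast; exact (Nat.lt_floor_add_one x).le
      _ ≤ _ := by exact_mod_cast Nat.pow_succ_le_ascFactorial _ r
  · calc ((⌊x⌋₊ + 1).ascFactorial r : ℝ) ≤ ((⌊x⌋₊ + r : ℕ) : ℝ) ^ r := by
          exact_mod_cast Nat.ascFactorial_le_pow_add _ r
      _ ≤ (x + r) ^ r := by gcongr; push_cast; linarith [Nat.floor_le hx]

lemma isBigO_ascFactorial_floor (r : ℕ) :
    (fun x : ℝ => ((⌊x⌋₊ + 1).ascFactorial r : ℝ)) =O[atTop] fun x => x ^ r := by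
  refine IsBigO.of_bound (2 ^ r) ?_
  filter_upwards [eventually_ge_atTop (r : ℝ)] with x hx
  have hx0 : 0 ≤ x := (Nat.cast_nonneg r).trans hx
  rw [Real.norm_natCast, norm_pow, Real.norm_of_nonneg hx0, ← mul_pow]
  exact (pow_le_ascFactorial_floor r hx0).2.trans (by gcongr; linarith)

lemma isBigO_ascFactorial_floor_sub_pow (s : ℕ) :
    (fun x : ℝ => ((⌊x⌋₊ + 1).ascFactorial (s + 1) : ℝ) - x ^ (s + 1)) =O[atTop]
      fun x => x ^ s := by
  refine IsBigO.of_bound ((s + 1) ^ 2 * 2 ^ s) ?_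
  filter_upwards [eventually_ge_atTop ((s : ℝ) + 1)] with x hx
  have hx0 : 0 ≤ x := by linarith [(Nat.cast_nonneg s : (0 : ℝ) ≤ s)]
  obtain ⟨hlow, hup⟩ := pow_le_ascFactorial_floor (s + 1) hx0
  have hdiff := add_pow_sub_pow_le hx0 (show (0 : ℝ) ≤ s + 1 by positivity) s
  push_cast at hup
  rw [Real.norm_of_nonneg (by linarith), norm_pow, Real.norm_of_nonneg hx0]
  calc _ ≤ (x + (s + 1)) ^ (s + 1) - x ^ (s + 1) := by linarith
    _ ≤ (s + 1) * (s + 1) * (x + (s + 1)) ^ s := hdiff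
    _ ≤ (s + 1) * (s + 1) * (2 * x) ^ s := by gcongr; linarith
    _ = (s + 1) ^ 2 * 2 ^ s * x ^ s := by ring

lemma harmonic_sub_log_mem_Icc {m : ℕ} {x : ℝ} (hx : 0 < x) (hxm : x ≤ m) :
    harmonic m - γ - log x ∈ Set.Icc 0 ((m + 1 - x) / x) := by
  have hm : m ≠ 0 := by rintro rfl; simp at hxm; linarith
  constructor
  · have h := eulerMascheroniConstant_lt_eulerMascheroniSeq' m
    rw [eulerMascheroniSeq', if_neg hm] at h
    linarith [log_le_log hx hxm]
  · have h := eulerMascheroniSeq_lt_eulerMascheroniConstant m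
    have hlog := log_le_sub_one_of_pos (show 0 < (m + 1) / x by positivity)
    rw [eulerMascheroniSeq] at h
    rw [log_div (by positivity) hx.ne', div_sub_one hx.ne'] at hlog
    linarith

lemma isBigO_harmonic_floor_add_sub_log (s : ℕ) :
    (fun x : ℝ => (harmonic (⌊x⌋₊ + (s + 1)) : ℝ) - γ - log x) =O[atTop] fun x => x⁻¹ := by
  refine IsBigO.of_bound (s + 2) ?_
  filter_upwards [eventually_gt_atTop 0] with x hx
  have hxm : x ≤ ((⌊x⌋₊ + (s + 1) : ℕ) : ℝ) := by
    push_cast; linarith [Nat.lt_floor_add_one x, (Nat.cast_nonneg s : (0 : ℝ) ≤ s)]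
  obtain ⟨h0, h1⟩ := harmonic_sub_log_mem_Icc hx hxm
  rw [Real.norm_of_nonneg h0, norm_inv, Real.norm_of_nonneg hx.le, ← div_eq_mul_inv]
  refine h1.trans (div_le_div_of_nonneg_right ?_ hx.le)
  push_cast; linarith [Nat.floor_le hx.le]

lemma isBigO_pow_mul_log (s : ℕ) :
    (fun x : ℝ => x ^ s) =O[atTop] fun x => x ^ s * log x := by
  simpa using (isBigO_refl (fun x : ℝ => x ^ s) atTop).mul
    (isLittleO_const_log_atTop (c := 1)).isBigO

lemma sum_hh_sub_main_terms_eq (r : ℕ) (x : ℝ) :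
    (∑ k ∈ Icc 1 ⌊x⌋₊, hh r k) - x ^ r * log x / r ! + digamma (r + 1) * x ^ r / r ! =
      (r ! : ℝ)⁻¹ * (((⌊x⌋₊ + 1).ascFactorial r : ℝ) * (harmonic (⌊x⌋₊ + r) - γ - log x) +
        (((⌊x⌋₊ + 1).ascFactorial r : ℝ) - x ^ r) * (log x + γ - harmonic r)) := by
  have hsum : ∑ k ∈ Icc 1 ⌊x⌋₊, hh r k = (r ! : ℝ)⁻¹ * (r ! * hh (r + 1) ⌊x⌋₊) := by
    rw [inv_mul_cancel_left₀ (by positivity)]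
    rfl
  rw [hsum, factorial_mul_hh_succ, digamma_nat_add_one]
  ring

theorem stmt7 (r : ℕ) (hr : 0 < r) :
    (fun x : ℝ => (∑ k ∈ Finset.Icc 1 ⌊x⌋₊, hh r k)
        - x ^ r * Real.log x / r.factorial
        + digamma (r + 1) * x ^ r / r.factorial)
      =O[atTop] fun x : ℝ => x ^ (r - 1) * Real.log x := by
  obtain ⟨s, rfl⟩ : ∃ s, r = s + 1 := ⟨r - 1, by omega⟩
  simp_rw [sum_hh_sub_main_terms_eq, Nat.add_sub_cancel]
  have hpow : (fun x : ℝ => x ^ (s + 1) * x⁻¹) =O[atTop] fun x => x ^ s :=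
    EventuallyEq.isBigO <| by
      filter_upwards [eventually_ne_atTop 0] with x hx
      rw [pow_succ, mul_inv_cancel_right₀ hx]
  have hlog : (fun x : ℝ => log x + γ - harmonic (s + 1)) =O[atTop] log :=
    ((isBigO_refl log atTop).add
      (isLittleO_const_log_atTop (c := γ - harmonic (s + 1))).isBigO).congr_left fun x => by ring
  have hmain := (((isBigO_ascFactorial_floor (s + 1)).mul
    (isBigO_harmonic_floor_add_sub_log s)).trans hpow).trans (isBigO_pow_mul_log s)
  exact (hmain.add ((isBigO_ascFactorial_floor_sub_pow s).mul hlog)).const_mul_left _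
end

section
/- The harmonic Stieltjes constant γ_H(0) := lim_{x→∞}( sum_{n ≤ x} H_n/n - (ln x)^2/2 - γ ln x ) equals γ²/2 + ζ(2)/2. -/
/-!
Since `H_n / n = (1/n) ∑_{k ≤ n} 1/k`, doubling `∑_{n ≤ N} H_n / n` gives every pair `k < n` twice and
every diagonal term twice, so `2 ∑_{n ≤ N} H_n / n = H_N² + ∑_{k ≤ N} 1/k²`. The Euler–Mascheroni bounds
`log N < H_N - γ < log (N + 1)` give `H_N - log x - γ = O(1/x)` for `N = ⌊x⌋`, which beats the
`O(log x)` size of `H_N + log x + γ`; hence `H_N² - (log x + γ)² → 0`, and what remains is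
`γ²/2 + ζ(2)/2`.
-/

open Filter Finset Real

/-- Harmonic numbers `H n = ∑_{k=1}^n 1/k`. -/
noncomputable def harm (n : ℕ) : ℝ := ∑ k ∈ Finset.Icc 1 n, (1 : ℝ) / k

open Asymptotics

lemma harm_eq_harmonic (n : ℕ) : harm n = harmonic n := by
  simp [harm, harmonic_eq_sum_Icc]

theorem Finset.two_mul_sum_Icc_mul_sum_Icc {R : Type*} [CommRing R] (f : ℕ → R) (N : ℕ) :
    2 * ∑ n ∈ Icc 1 N, f n * ∑ k ∈ Icc 1 n, f k
      = (∑ n ∈ Icc 1 N, f n) ^ 2 + ∑ n ∈ Icc 1 N, f n ^ 2 := by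
  induction N with
  | zero => simp
  | succ N ih =>
    simp only [sum_Icc_succ_top (Nat.le_add_left 1 N), mul_add, ih]
    ring

lemma sum_Icc_harm_div_eq (N : ℕ) :
    ∑ n ∈ Icc 1 N, harm n / n = (harm N ^ 2 + ∑ n ∈ Icc 1 N, 1 / (n : ℝ) ^ 2) / 2 := by
  have := two_mul_sum_Icc_mul_sum_Icc (fun n : ℕ => 1 / (n : ℝ)) N
  simp only [div_pow, one_pow] at this
  rw [eq_div_iff two_ne_zero, mul_comm, harm, ← this]
  simp only [harm, div_eq_inv_mul, mul_one]

lemma tendsto_sum_Icc_one_div_sq :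
    Tendsto (fun N : ℕ => ∑ n ∈ Icc 1 N, 1 / (n : ℝ) ^ 2) atTop (nhds (π ^ 2 / 6)) := by
  refine (hasSum_zeta_two.tendsto_sum_nat.comp (tendsto_add_atTop_nat 1)).congr fun N => ?_
  rw [Function.comp_apply, range_eq_Ico, sum_eq_sum_Ico_succ_bot N.succ_pos,
    ← Ico_add_one_right_eq_Icc]
  simp

lemma log_lt_harmonic_sub_eulerMascheroniConstant {n : ℕ} (hn : n ≠ 0) :
    log n < harmonic n - eulerMascheroniConstant := by
  have := eulerMascheroniConstant_lt_eulerMascheroniSeq' n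
  rw [eulerMascheroniSeq', if_neg hn] at this
  linarith

lemma harmonic_sub_eulerMascheroniConstant_lt_log_add_one (n : ℕ) :
    harmonic n - eulerMascheroniConstant < log (n + 1) := by
  have := eulerMascheroniSeq_lt_eulerMascheroniConstant n
  rw [eulerMascheroniSeq] at this
  linarith

lemma abs_harmonic_floor_sub_log_sub_eulerMascheroniConstant_le {x : ℝ} (hx : 1 ≤ x) :
    |harmonic ⌊x⌋₊ - log x - eulerMascheroniConstant| ≤ 2 * x⁻¹ := by
  set N := ⌊x⌋₊
  have hN : 1 ≤ N := Nat.one_le_floor_iff _ |>.mpr hx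
  have hN1 : (1 : ℝ) ≤ N := by exact_mod_cast hN
  have hN0 : (0 : ℝ) < N := by linarith
  have hNx : (N : ℝ) ≤ x := Nat.floor_le (by linarith)
  have hxN : x < N + 1 := Nat.lt_floor_add_one x
  -- both `H_N - γ` and `log x` lie in `[log N, log (N + 1)]`
  have hH_lower := log_lt_harmonic_sub_eulerMascheroniConstant (n := N) (by omega)
  have hH_upper := harmonic_sub_eulerMascheroniConstant_lt_log_add_one N
  have hlog_lower := log_le_log hN0 hNx
  have hlog_upper := log_lt_log (by linarith) hxN
  have hgap : log (N + 1) - log N ≤ 2 * x⁻¹ := calc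
    log (N + 1) - log N = log (1 + (N : ℝ)⁻¹) := by
      rw [← log_div (by positivity) hN0.ne']; congr 1; field_simp
    _ ≤ (N : ℝ)⁻¹ := by linarith [log_le_sub_one_of_pos (x := 1 + (N : ℝ)⁻¹) (by positivity)]
    _ ≤ 2 * x⁻¹ := by
      rw [← div_eq_mul_inv, inv_eq_one_div, div_le_div_iff₀ hN0 (by linarith)]
      linarith
  rw [abs_le]
  constructor <;> linarith

lemma isBigO_harmonic_floor_sub_log_sub_eulerMascheroniConstant :
    (fun x : ℝ => harmonic ⌊x⌋₊ - log x - eulerMascheroniConstant) =O[atTop] fun x => x⁻¹ := by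
  refine IsBigO.of_bound 2 ?_
  filter_upwards [eventually_ge_atTop 1] with x hx
  rw [Real.norm_eq_abs, norm_inv, Real.norm_eq_abs, abs_of_pos (by linarith : 0 < x)]
  exact abs_harmonic_floor_sub_log_sub_eulerMascheroniConstant_le hx

lemma tendsto_harmonic_floor_sub_log_sub_eulerMascheroniConstant :
    Tendsto (fun x : ℝ => harmonic ⌊x⌋₊ - log x - eulerMascheroniConstant) atTop (nhds 0) :=
  isBigO_harmonic_floor_sub_log_sub_eulerMascheroniConstant.trans_tendsto tendsto_inv_atTop_zero

lemma tendsto_harmonic_floor_sub_log_sub_eulerMascheroniConstant_mul_log :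
    Tendsto (fun x : ℝ => (harmonic ⌊x⌋₊ - log x - eulerMascheroniConstant) * log x)
      atTop (nhds 0) := by
  refine (isBigO_harmonic_floor_sub_log_sub_eulerMascheroniConstant.mul (isBigO_refl log _))
    |>.trans_tendsto ?_
  simpa [inv_mul_eq_div] using isLittleO_log_id_atTop.tendsto_div_nhds_zero

theorem stmt17 :
    Tendsto (fun x : ℝ => (∑ n ∈ Finset.Icc 1 ⌊x⌋₊, harm n / n)
        - (Real.log x) ^ 2 / 2 - Real.eulerMascheroniConstant * Real.log x)
      atTop (nhds (Real.eulerMascheroniConstant ^ 2 / 2 + (π ^ 2 / 6) / 2)) := by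
  have he := tendsto_harmonic_floor_sub_log_sub_eulerMascheroniConstant
  have hel := tendsto_harmonic_floor_sub_log_sub_eulerMascheroniConstant_mul_log
  have hsum := tendsto_sum_Icc_one_div_sq.comp tendsto_nat_floor_atTop (α := ℝ)
  -- with `e = H - log x - γ`, `H² - (log x + γ)² = e² + 2 e log x + 2 γ e`
  have key := (tendsto_const_nhds (x := eulerMascheroniConstant ^ 2 / 2)).add
    ((((he.pow 2).add (hel.const_mul 2)).add (he.const_mul (2 * eulerMascheroniConstant))).add
      hsum |>.div_const 2)
  convert key using 2 with x
  · rw [sum_Icc_harm_div_eq, harm_eq_harmonic, Function.comp_apply]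
    ring
  · simp
end
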